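/- Fix R > 0 and δ > 1, and define u_{R,δ} : ℝ² → ℝ by u_{R,δ}(x) = 0 for |x| > R, u_{R,δ}(x) = (1/√(2π)) log(R/|x|)/√(log δ) for R/δ ≤ |x| ≤ R, and u_{R,δ}(x) = (1/√(2π)) √(log δ) for |x| ≤ R/δ. Then ‖∇u_{R,δ}‖_{L²(ℝ²)} = 1 and, with T := πR², sup_{0 < t ≤ T} (u_{R,δ}*(t) − u_{R,δ}*(T)) / √(log(T/t)) = 1/√(4π). -/

import Mathlib

/-! `u` is the radial profile `c · min (log δ, log⁺ (R / r))` with `c = (2π log δ)^(-1/2)`.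
Its superlevel set `{|u| > s}` is the disc of radius `R e^(-s/c)`, of area `T e^(-2s/c)`, so
`u*(t) = min (c log δ, (c/2) log (T/t))` and `u*(T) = 0`. With `L = log (T/t)`, the inequality
`min (M, aL)² ≤ M · aL` bounds the quotient by `√(Ma) = 1/√(4π)`, with equality at `L = M/a`,
i.e. `t = T/δ²`. The gradient has modulus `c/r` on the annulus `R/δ < r < R` and vanishes off
it (up to two null circles), so in polar coordinates `∫ |∇u|² = 2π c² log δ = 1`. -/

open MeasureTheory Real

/-- The decreasing rearrangement of a function on `ℝ²`. -/
noncomputable def decRearr (u : EuclideanSpace ℝ (Fin 2) → ℝ) (t : ℝ) : ℝ :=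
  sInf {s : ℝ | 0 ≤ s ∧ volume {x : EuclideanSpace ℝ (Fin 2) | s < |u x|} ≤ ENNReal.ofReal t}

open Metric Set Filter Topology

lemma decRearr_eq_of_forall_iff {u : EuclideanSpace ℝ (Fin 2) → ℝ} {t s₀ : ℝ} (hs₀ : 0 ≤ s₀)
    (h : ∀ s, 0 ≤ s → (volume {x | s < |u x|} ≤ ENNReal.ofReal t ↔ s₀ ≤ s)) :
    decRearr u t = s₀ := by
  have hset : {s : ℝ | 0 ≤ s ∧ volume {x | s < |u x|} ≤ ENNReal.ofReal t} = Ici s₀ := by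
    ext s
    exact ⟨fun ⟨hs, hv⟩ => (h s hs).1 hv, fun hs => ⟨hs₀.trans hs, (h s (hs₀.trans hs)).2 hs⟩⟩
  rw [decRearr, hset, csInf_Ici]

lemma min_div_sqrt_le {M a L : ℝ} (hM : 0 ≤ M) (ha : 0 ≤ a) (hL : 0 ≤ L) :
    min M (a * L) / √L ≤ √(M * a) := by
  rcases hL.eq_or_lt with rfl | hL
  · simp [sqrt_nonneg]
  rw [div_le_iff₀ (sqrt_pos.2 hL), ← sqrt_mul (by positivity)]
  refine le_sqrt_of_sq_le ?_
  calc min M (a * L) ^ 2 = min M (a * L) * min M (a * L) := sq _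
    _ ≤ M * (a * L) := mul_le_mul (min_le_left _ _) (min_le_right _ _)
        (le_min hM (by positivity)) hM
    _ = M * a * L := by ring

lemma div_sqrt_div {M a : ℝ} (hM : 0 ≤ M) (ha : 0 ≤ a) : M / √(M / a) = √(M * a) := by
  rw [sqrt_div' M ha, sqrt_mul hM, div_div_eq_mul_div, mul_comm, mul_div_assoc, div_sqrt,
    mul_comm]

lemma ae_norm_ne {E : Type*} [NormedAddCommGroup E] [NormedSpace ℝ E] [MeasurableSpace E]
    [BorelSpace E] [FiniteDimensional ℝ E] [Nontrivial E] (μ : Measure E) [μ.IsAddHaarMeasure]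
    (r : ℝ) : ∀ᵐ x ∂μ, ‖x‖ ≠ r := by
  simpa [ae_iff, sphere, dist_zero_right] using Measure.addHaar_sphere μ 0 r

lemma norm_fderiv_comp_norm {E : Type*} [NormedAddCommGroup E] [InnerProductSpace ℝ E]
    {φ : ℝ → ℝ} {φ' : ℝ} {x : E} (hx : x ≠ 0) (hφ : HasDerivAt φ φ' ‖x‖) :
    ‖fderiv ℝ (fun y => φ ‖y‖) x‖ = |φ'| := by
  have : Nontrivial E := ⟨⟨x, 0, hx⟩⟩
  have hnorm : DifferentiableAt ℝ (‖·‖) x :=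
    (contDiffAt_norm ℝ hx (n := 1)).differentiableAt one_ne_zero
  have hcomp : HasFDerivAt (fun y => φ ‖y‖) (φ' • fderiv ℝ (‖·‖) x) x :=
    hφ.comp_hasFDerivAt x hnorm.hasFDerivAt
  rw [hcomp.fderiv, norm_smul, norm_fderiv_norm hnorm, mul_one, Real.norm_eq_abs]

lemma integral_fun_norm_euclideanSpace_fin_two (f : ℝ → ℝ) :
    ∫ x : EuclideanSpace ℝ (Fin 2), f ‖x‖ = 2 * π * ∫ r in Ioi (0 : ℝ), r * f r := by
  rw [integral_fun_norm_addHaar volume f, finrank_euclideanSpace_fin, measureReal_def,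
    EuclideanSpace.volume_ball_fin_two]
  simp [mul_assoc, pi_nonneg]

noncomputable def moserProfile (R δ c r : ℝ) : ℝ :=
  if r ≤ R / δ then c * log δ else if r ≤ R then c * log (R / r) else 0

section moserProfile

variable {R δ c : ℝ}

lemma lt_mul_exp_neg_div_iff (hR : 0 < R) (hc : 0 < c) {r : ℝ} (hr : 0 < r) (s : ℝ) :
    r < R * exp (-(s / c)) ↔ s < c * log (R / r) := by
  rw [← div_lt_iff₀' hc, lt_log_iff_exp_lt (by positivity), lt_div_iff₀ hr, exp_neg,
    ← div_eq_mul_inv, lt_div_iff₀ (exp_pos _), mul_comm]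

lemma lt_abs_moserProfile_iff (hR : 0 < R) (hδ : 1 < δ) (hc : 0 < c) {s : ℝ} (hs : 0 ≤ s)
    (r : ℝ) : s < |moserProfile R δ c r| ↔ s < c * log δ ∧ r < R * exp (-(s / c)) := by
  have hRδ : 0 < R / δ := div_pos hR (by linarith)
  have hρR : R * exp (-(s / c)) ≤ R :=
    mul_le_of_le_one_right hR.le (exp_le_one_iff.2 (neg_nonpos.2 (by positivity)))
  unfold moserProfile
  split_ifs with h₁ h₂
  · rw [abs_of_pos (mul_pos hc (log_pos hδ)), iff_self_and]
    intro hs'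
    refine h₁.trans_lt ((lt_mul_exp_neg_div_iff hR hc hRδ s).2 ?_)
    rwa [div_div_cancel₀ hR.ne']
  · have hr : 0 < r := hRδ.trans (not_le.1 h₁)
    have hlog_le : log (R / r) ≤ log δ := by
      refine log_le_log (by positivity) ((div_le_iff₀ hr).2 ?_)
      linarith [(div_lt_iff₀ (by linarith : 0 < δ)).1 (not_le.1 h₁)]
    rw [abs_of_nonneg (mul_nonneg hc.le (log_nonneg ((one_le_div hr).2 h₂))),
      lt_mul_exp_neg_div_iff hR hc hr]
    exact ⟨fun h => ⟨h.trans_le (by gcongr), h⟩, And.right⟩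
  · rw [abs_zero]
    exact iff_of_false hs.not_gt fun h => h₂ ((h.2.trans_le hρR).le)

lemma volume_lt_abs_moserProfile_le_iff (hR : 0 < R) (hδ : 1 < δ) (hc : 0 < c) {s t : ℝ}
    (hs : 0 ≤ s) (ht : 0 < t) :
    volume {x : EuclideanSpace ℝ (Fin 2) | s < |moserProfile R δ c ‖x‖|} ≤ ENNReal.ofReal t ↔
      min (c * log δ) (c / 2 * log (π * R ^ 2 / t)) ≤ s := by
  simp_rw [lt_abs_moserProfile_iff hR hδ hc hs]
  by_cases hsM : s < c * log δ
  · have hball : {x : EuclideanSpace ℝ (Fin 2) | s < c * log δ ∧ ‖x‖ < R * exp (-(s / c))} =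
        ball 0 (R * exp (-(s / c))) := by
      ext x
      simp [hsM]
    rw [hball, EuclideanSpace.volume_ball_fin_two, ← ENNReal.ofReal_pow (by positivity),
      ← ENNReal.ofReal_mul (by positivity), ENNReal.ofReal_le_ofReal_iff ht.le,
      min_le_iff, or_iff_right hsM.not_ge]
    have hvol : (R * exp (-(s / c))) ^ 2 * π = π * R ^ 2 / exp (2 * s / c) := by
      rw [div_eq_mul_inv (π * R ^ 2), ← exp_neg, mul_pow, ← exp_nat_mul]
      ring_nf
    rw [hvol, div_le_iff₀ (exp_pos _), ← div_le_iff₀' ht, ← log_le_iff_le_exp (by positivity),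
      le_div_iff₀ hc]
    constructor <;> intro h <;> linarith
  · have hempty :
        {x : EuclideanSpace ℝ (Fin 2) | s < c * log δ ∧ ‖x‖ < R * exp (-(s / c))} = ∅ :=
      eq_empty_of_forall_notMem fun x hx => hsM hx.1
    simp [hempty, not_lt.1 hsM]

lemma decRearr_moserProfile (hR : 0 < R) (hδ : 1 < δ) (hc : 0 < c) {t : ℝ} (ht : 0 < t)
    (htT : t ≤ π * R ^ 2) :
    decRearr (fun x => moserProfile R δ c ‖x‖) t =
      min (c * log δ) (c / 2 * log (π * R ^ 2 / t)) :=
  decRearr_eq_of_forall_iff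
    (le_min (mul_nonneg hc.le (log_nonneg hδ.le))
      (mul_nonneg (by positivity) (log_nonneg ((one_le_div ht).2 htT))))
    fun _ hs => volume_lt_abs_moserProfile_le_iff hR hδ hc hs ht

lemma isGreatest_decRearr_moserProfile_quotient (hR : 0 < R) (hδ : 1 < δ) (hc : 0 < c) :
    IsGreatest {y : ℝ | ∃ t : ℝ, 0 < t ∧ t ≤ π * R ^ 2 ∧
        y = (decRearr (fun x => moserProfile R δ c ‖x‖) t -
          decRearr (fun x => moserProfile R δ c ‖x‖) (π * R ^ 2)) / √(log (π * R ^ 2 / t))}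
      √(c * log δ * (c / 2)) := by
  have hT : 0 < π * R ^ 2 := by positivity
  have hM : 0 < c * log δ := mul_pos hc (log_pos hδ)
  have hquot : ∀ t, 0 < t → t ≤ π * R ^ 2 →
      (decRearr (fun x => moserProfile R δ c ‖x‖) t -
          decRearr (fun x => moserProfile R δ c ‖x‖) (π * R ^ 2)) / √(log (π * R ^ 2 / t)) =
        min (c * log δ) (c / 2 * log (π * R ^ 2 / t)) / √(log (π * R ^ 2 / t)) := by
    intro t ht htT
    rw [decRearr_moserProfile hR hδ hc ht htT, decRearr_moserProfile hR hδ hc hT le_rfl,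
      div_self hT.ne', log_one, mul_zero, min_eq_right hM.le, sub_zero]
  have hwitness : π * R ^ 2 / δ ^ 2 ≤ π * R ^ 2 := div_le_self hT.le (one_le_pow₀ hδ.le)
  refine ⟨⟨π * R ^ 2 / δ ^ 2, by positivity, hwitness, ?_⟩, ?_⟩
  · have hL : log (π * R ^ 2 / (π * R ^ 2 / δ ^ 2)) = c * log δ / (c / 2) := by
      rw [div_div_cancel₀ hT.ne', log_pow]
      field_simp
      ring
    rw [hquot _ (by positivity) hwitness, hL, mul_div_cancel₀ _ (by positivity), min_self,
      div_sqrt_div hM.le (by positivity)]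
  · rintro y ⟨t, ht, htT, rfl⟩
    rw [hquot t ht htT]
    exact min_div_sqrt_le hM.le (by positivity) (log_nonneg ((one_le_div ht).2 htT))

lemma hasDerivAt_moserProfile (hR : 0 < R) (hδ : 1 < δ) {r : ℝ} (hr : 0 < r) (h₁ : r ≠ R / δ)
    (h₂ : r ≠ R) :
    HasDerivAt (moserProfile R δ c) ((Ioo (R / δ) R).indicator (fun r => -(c / r)) r) r := by
  rcases h₁.lt_or_gt with h₁ | h₁
  · have hconst : moserProfile R δ c =ᶠ[𝓝 r] fun _ => c * log δ := by
      filter_upwards [Iic_mem_nhds h₁] with ρ hρ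
      simp [moserProfile, mem_Iic.1 hρ]
    rw [indicator_of_notMem fun h => h₁.not_gt h.1]
    exact (hasDerivAt_const r _).congr_of_eventuallyEq hconst
  rcases h₂.lt_or_gt with h₂ | h₂
  · have hlog : moserProfile R δ c =ᶠ[𝓝 r] fun ρ => c * (log R - log ρ) := by
      filter_upwards [Ioo_mem_nhds h₁ h₂] with ρ hρ
      have hρ0 : 0 < ρ := (div_pos hR (by linarith)).trans hρ.1
      simp [moserProfile, not_le.2 hρ.1, hρ.2.le, log_div hR.ne' hρ0.ne']
    rw [indicator_of_mem (show r ∈ Ioo (R / δ) R from ⟨h₁, h₂⟩)]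
    refine ((((hasDerivAt_log hr.ne').const_sub (log R)).const_mul c).congr_of_eventuallyEq
      hlog).congr_deriv ?_
    ring
  · have hzero : moserProfile R δ c =ᶠ[𝓝 r] fun _ => 0 := by
      filter_upwards [Ioi_mem_nhds h₂] with ρ hρ
      have hRδ : R / δ ≤ R := div_le_self hR.le hδ.le
      simp [moserProfile, not_le.2 (hRδ.trans_lt hρ), not_le.2 (mem_Ioi.1 hρ)]
    rw [indicator_of_notMem fun h => h₂.not_gt h.2]
    exact (hasDerivAt_const r _).congr_of_eventuallyEq hzero

lemma norm_fderiv_moserProfile_sq_ae_eq (hR : 0 < R) (hδ : 1 < δ) :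
    (fun x : EuclideanSpace ℝ (Fin 2) => ‖fderiv ℝ (fun y => moserProfile R δ c ‖y‖) x‖ ^ 2)
      =ᵐ[volume] fun x => (Ioo (R / δ) R).indicator (fun r => (c / r) ^ 2) ‖x‖ := by
  filter_upwards [ae_norm_ne volume 0, ae_norm_ne volume (R / δ), ae_norm_ne volume R]
    with x h₀ h₁ h₂
  rw [norm_fderiv_comp_norm (norm_ne_zero_iff.1 h₀)
    (hasDerivAt_moserProfile hR hδ ((norm_nonneg x).lt_of_ne' h₀) h₁ h₂), sq_abs]
  by_cases hx : ‖x‖ ∈ Ioo (R / δ) R <;> simp [hx]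

lemma integral_norm_fderiv_moserProfile_sq (hR : 0 < R) (hδ : 1 < δ) :
    ∫ x : EuclideanSpace ℝ (Fin 2), ‖fderiv ℝ (fun y => moserProfile R δ c ‖y‖) x‖ ^ 2 =
      2 * π * (c ^ 2 * log δ) := by
  have hRδ : 0 < R / δ := div_pos hR (by linarith)
  have hIoo : Ioo (R / δ) R ⊆ Ioi 0 := fun r hr => hRδ.trans hr.1
  have hintegrand : (fun r => r * (Ioo (R / δ) R).indicator (fun r => (c / r) ^ 2) r) =
      (Ioo (R / δ) R).indicator (fun r => c ^ 2 * r⁻¹) := by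
    ext r
    by_cases hr : r ∈ Ioo (R / δ) R
    · have : r ≠ 0 := (hIoo hr).ne'
      simp only [indicator_of_mem hr]
      field_simp
    · simp [hr]
  rw [integral_congr_ae (norm_fderiv_moserProfile_sq_ae_eq hR hδ),
    integral_fun_norm_euclideanSpace_fin_two, hintegrand, integral_indicator measurableSet_Ioo,
    Measure.restrict_restrict measurableSet_Ioo, inter_eq_left.2 hIoo, integral_const_mul,
    ← integral_Ioc_eq_integral_Ioo, ← intervalIntegral.integral_of_le (div_le_self hR.le hδ.le),
    integral_inv_of_pos hRδ hR, div_div_cancel₀ hR.ne']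

end moserProfile

/-- The explicit Moser-type extremal `u_{R,δ}` has unit Dirichlet norm and attains
the best constant `1/√(4π)` in the Alvino-type inequality on `(0, T]`, `T = πR²`. -/
theorem alvino_extremal
    (R δ : ℝ) (hR : 0 < R) (hδ : 1 < δ)
    (u : EuclideanSpace ℝ (Fin 2) → ℝ)
    (hu : ∀ x : EuclideanSpace ℝ (Fin 2),
      u x = if ‖x‖ ≤ R / δ then (1 / Real.sqrt (2 * π)) * Real.sqrt (Real.log δ)
        else if ‖x‖ ≤ R then
          (1 / Real.sqrt (2 * π)) * (Real.log (R / ‖x‖) / Real.sqrt (Real.log δ))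
        else 0)
    (T : ℝ) (hT : T = π * R ^ 2) :
    Real.sqrt (∫ x : EuclideanSpace ℝ (Fin 2), ‖fderiv ℝ u x‖ ^ 2 ∂volume) = 1 ∧
    sSup {y : ℝ | ∃ t : ℝ, 0 < t ∧ t ≤ T ∧
        y = (decRearr u t - decRearr u T) / Real.sqrt (Real.log (T / t))} =
      1 / Real.sqrt (4 * π) := by
  subst hT
  have hlogδ : 0 < log δ := log_pos hδ
  set c := 1 / (√(2 * π) * √(log δ)) with hc_def
  have hc : 0 < c := by positivity
  have hc_sq : c ^ 2 * log δ = 1 / (2 * π) := by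
    rw [hc_def, div_pow, mul_pow, sq_sqrt (by positivity), sq_sqrt hlogδ.le]
    field_simp
  have hc_log : c * log δ = 1 / √(2 * π) * √(log δ) := by
    rw [hc_def]
    field_simp
    rw [sq_sqrt hlogδ.le]
  obtain rfl : u = fun x => moserProfile R δ c ‖x‖ := by
    ext x
    rw [hu x, moserProfile, hc_log, hc_def]
    split_ifs <;> ring
  refine ⟨?_, (isGreatest_decRearr_moserProfile_quotient hR hδ hc).csSup_eq.trans ?_⟩
  · rw [integral_norm_fderiv_moserProfile_sq hR hδ, hc_sq, mul_one_div_cancel (by positivity),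
      sqrt_one]
  · rw [show c * log δ * (c / 2) = (4 * π)⁻¹ by linear_combination hc_sq / 2,
      sqrt_inv, one_div]
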